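/- Let Ē− := {y ∈ E : α(y) ≤ 0 for all α ∈ Φ0+}. If c ∈ C̄+ and y ∈ (W·c) ∩ Ē−, then y = v·c + μ for some v ∈ W0 and some μ ∈ Q∨ ∩ Ē−. -/

import Mathlib

open scoped InnerProductSpace Classical

noncomputable section

namespace SSV

variable {E : Type*} [NormedAddCommGroup E] [InnerProductSpace ℝ E]

/-- The coroot `α∨ = (2/‖α‖²)·α` of `α ∈ E`, under the identification of `E*` with `E`
via the inner product (a root `α` acts on `E` as the linear functional `y ↦ ⟪α,y⟫`). -/
def cv (α : E) : E := (2 / ⟪α, α⟫_ℝ) • α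

/-- The linear functional `y ↦ ⟪α∨, y⟫ = 2⟪α,y⟫/‖α‖²`. -/
def rootForm (α : E) : E →ₗ[ℝ] ℝ where
  toFun y := 2 / ⟪α, α⟫_ℝ * ⟪α, y⟫_ℝ
  map_add' y z := by rw [inner_add_right]; ring
  map_smul' c y := by
    simp only [RingHom.id_apply, smul_eq_mul, real_inner_smul_right]
    ring

/-- The orthogonal reflection `s_α : y ↦ y − α(y)·α∨` in the hyperplane `α = 0`. -/
def lrefl (α : E) : E ≃ₗ[ℝ] E :=
  if h : ⟪α, α⟫_ℝ = 0 then LinearEquiv.refl ℝ E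
  else
    Module.reflection (f := rootForm α) (x := α)
      (by simp only [rootForm, LinearMap.coe_mk, AddHom.coe_mk]; field_simp)

/-- The affine reflection `s_a : y ↦ y − a(y)·α∨` associated to the affine root
`a = (α, c)`, i.e. to the affine function `y ↦ α(y) + c = ⟪α,y⟫ + c` on `E`. -/
def aRefl (α : E) (c : ℝ) : E ≃ᵃ[ℝ] E :=
  (lrefl α).toAffineEquiv.trans (AffineEquiv.constVAdd ℝ E (-(c • cv α)))

/-- The translation `τ(μ) : y ↦ y + μ`. -/
def tr (μ : E) : E ≃ᵃ[ℝ] E := AffineEquiv.constVAdd ℝ E μ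

/-- `η = χ_{ℤ_{>0}} − χ_{ℤ_{≤0}} : ℝ → {−1,0,1}`. -/
def eta (x : ℝ) : ℤ :=
  if ∃ n : ℤ, x = (n : ℝ) then (if 0 < x then 1 else -1) else 0

/-- `sgn(ℓ) = ℓ/|ℓ|` for `ℓ ≠ 0`, and `sgn(0) = 1`. -/
def sgnz (l : ℤ) : ℤ := if 0 ≤ l then 1 else -1

/-- The alternating word `j j' j j' ⋯` of length `m`. -/
def altList {n : ℕ} (j j' : Fin n) (m : ℕ) : List (Fin n) :=
  (List.range m).map fun s => if s % 2 = 0 then j else j'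

/-- Evaluation of the affine function `a = (α, c)` at `y`: `a(y) = α(y) + c`. -/
def aval (a : E × ℝ) (y : E) : ℝ := ⟪a.1, y⟫_ℝ + a.2

/-- The contragredient action of `w` on affine roots: `(w·a)(y) = a(w⁻¹·y)`. -/
def wact (w : E ≃ᵃ[ℝ] E) (a : E × ℝ) : E × ℝ :=
  (w.linear a.1, a.2 - ⟪w.linear a.1, w 0⟫_ℝ)

/-- The relation `y ≺_α z`. -/
def precA (α : E) (y z : E) : Prop :=
  (∃ l : ℤ, y = aRefl α (l : ℝ) z) ∧
    (|⟪α, y⟫_ℝ| < |⟪α, z⟫_ℝ| ∨ (⟪α, y⟫_ℝ = -⟪α, z⟫_ℝ ∧ 0 < ⟪α, y⟫_ℝ))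

/-- The data of a reduced irreducible finite root system `Φ0` realised in `E* ≅ E`,
normalised so that long roots have squared length `2/m²`, together with a choice of
positive roots, simple roots `α_1, …, α_r`, and the corresponding highest root `φ`. -/
structure Data (E : Type*) [NormedAddCommGroup E] [InnerProductSpace ℝ E] where
  r : ℕ
  r_pos : 0 < r
  m : ℕ
  m_pos : 0 < m
  Φ0 : Finset E
  pos : Finset E
  simple : Fin r → E
  hroot : E
  root_ne_zero : ∀ α ∈ Φ0, α ≠ 0
  root_neg_mem : ∀ α ∈ Φ0, -α ∈ Φ0
  root_reduced : ∀ α ∈ Φ0, ∀ c : ℝ, c • α ∈ Φ0 → c = 1 ∨ c = -1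
  root_refl_mem : ∀ α ∈ Φ0, ∀ β ∈ Φ0, aRefl α 0 β ∈ Φ0
  root_crystal : ∀ α ∈ Φ0, ∀ β ∈ Φ0, ∃ n : ℤ, ⟪cv β, α⟫_ℝ = (n : ℝ)
  root_irred : ∀ A B : Set E, (Φ0 : Set E) = A ∪ B → A.Nonempty → B.Nonempty →
    (∀ a ∈ A, ∀ b ∈ B, ⟪a, b⟫_ℝ = 0) → False
  root_norm_le : ∀ α ∈ Φ0, ⟪α, α⟫_ℝ ≤ 2 / (m : ℝ) ^ 2
  root_norm_int : ∀ α ∈ Φ0, ∃ n : ℤ, (n : ℝ) * ⟪α, α⟫_ℝ = 2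
  pos_subset : pos ⊆ Φ0
  pos_dichotomy : ∀ α ∈ Φ0, (α ∈ pos ∧ -α ∉ pos) ∨ (α ∉ pos ∧ -α ∈ pos)
  simple_mem_pos : ∀ i, simple i ∈ pos
  simple_indep : LinearIndependent ℝ simple
  pos_nat_comb : ∀ α ∈ pos, ∃ n : Fin r → ℕ, α = ∑ i, (n i : ℝ) • simple i
  hroot_mem_pos : hroot ∈ pos
  hroot_long : ⟪hroot, hroot⟫_ℝ = 2 / (m : ℝ) ^ 2
  hroot_highest : ∀ α ∈ Φ0, ∃ n : Fin r → ℕ, hroot - α = ∑ i, (n i : ℝ) • simple i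

namespace Data

variable (D : Data E)

/-- The coroot lattice `Q∨`. -/
def Qv : AddSubgroup E := AddSubgroup.closure (cv '' (D.Φ0 : Set E))

/-- The simple affine roots `α_0 = (−φ, 1)` and `α_i = (α_i, 0)` (`1 ≤ i ≤ r`), as pairs
`(gradient, constant term)`. -/
def asimple : Fin (D.r + 1) → E × ℝ :=
  Fin.cases (-D.hroot, (1 : ℝ)) fun i => (D.simple i, (0 : ℝ))

/-- The simple reflections `s_0, …, s_r` of the affine Weyl group. -/
def sgen (j : Fin (D.r + 1)) : E ≃ᵃ[ℝ] E := aRefl (D.asimple j).1 (D.asimple j).2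

/-- `a = (α, c)` is an affine root iff `α ∈ Φ0` and `c ∈ ℤ`. -/
def IsAffRoot (a : E × ℝ) : Prop := a.1 ∈ D.Φ0 ∧ ∃ n : ℤ, a.2 = (n : ℝ)

/-- `a` is a positive affine root. -/
def IsPosAff (a : E × ℝ) : Prop :=
  D.IsAffRoot a ∧ (0 < a.2 ∨ (a.2 = 0 ∧ a.1 ∈ D.pos))

/-- The set of reflections `s_α`, `α ∈ Φ0`. -/
def reflSet : Set (E ≃ᵃ[ℝ] E) := {g | ∃ α ∈ D.Φ0, g = aRefl α 0}

/-- The set of translations `τ(μ)`, `μ ∈ Q∨`. -/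
def trSet : Set (E ≃ᵃ[ℝ] E) := {g | ∃ μ ∈ D.Qv, g = tr μ}

/-- The finite Weyl group `W0`, generated by the reflections `s_α`. -/
def W0 : Subgroup (E ≃ᵃ[ℝ] E) := Subgroup.closure D.reflSet

/-- The affine Weyl group `W = W0 ⋉ Q∨`. -/
def W : Subgroup (E ≃ᵃ[ℝ] E) := Subgroup.closure (D.reflSet ∪ D.trSet)

/-- The inversion set `Π(w) = Φ+ ∩ w⁻¹Φ−`. -/
def PiSet (w : E ≃ᵃ[ℝ] E) : Set (E × ℝ) :=
  {a | D.IsPosAff a ∧ ¬D.IsPosAff (wact w a)}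

/-- The length function `ℓ(w) := #Π(w)`. -/
def len (w : E ≃ᵃ[ℝ] E) : ℕ := (D.PiSet w).ncard

/-- The open fundamental alcove `C₊`. -/
def Cp : Set E := {y | ∀ α ∈ D.pos, 0 < ⟪α, y⟫_ℝ ∧ ⟪α, y⟫_ℝ < 1}

/-- The closed fundamental alcove `C̄₊`. -/
def Cbar : Set E := closure D.Cp

/-- The face `C^J` of `C̄₊` (for `J ⊊ {0,…,r}`). -/
def CJ (J : Set (Fin (D.r + 1))) : Set E :=
  {c | c ∈ D.Cbar ∧ ∀ j, aval (D.asimple j) c = 0 ↔ j ∈ J}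

/-- The orbit `O_c = W·c`. -/
def Orb (c : E) : Set E := {y | ∃ w ∈ D.W, w c = y}

/-- The unique point `c_y ∈ C̄₊` in the `W`-orbit of `y`. -/
def cpt (y : E) : E :=
  if h : ∃ c, c ∈ D.Cbar ∧ ∃ w ∈ D.W, w c = y then h.choose else 0

/-- The unique shortest element `w_y ∈ W` with `w_y · c_y = y`. -/
def wmin (y : E) : E ≃ᵃ[ℝ] E :=
  if h : ∃ w, (w ∈ D.W ∧ w (D.cpt y) = y) ∧
      ∀ u, u ∈ D.W → u (D.cpt y) = y → D.len w ≤ D.len u then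
    h.choose
  else 1

/-- Reflections of the Coxeter system `(W, {s_0, …, s_r})`. -/
def IsCoxRefl (g : E ≃ᵃ[ℝ] E) : Prop := ∃ w ∈ D.W, ∃ j, g = w * D.sgen j * w⁻¹

/-- A single step in the Bruhat order. -/
def bstep (u v : E ≃ᵃ[ℝ] E) : Prop :=
  (∃ g, D.IsCoxRefl g ∧ v = g * u) ∧ D.len u < D.len v

/-- The Bruhat order `≤_B` of `(W, {s_0, …, s_r})`. -/
def bruhatLE : (E ≃ᵃ[ℝ] E) → (E ≃ᵃ[ℝ] E) → Prop := Relation.ReflTransGen D.bstep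

/-- The strict Bruhat order `<_B`. -/
def bruhatLT (u v : E ≃ᵃ[ℝ] E) : Prop := D.bruhatLE u v ∧ u ≠ v

/-- The parabolic Bruhat order `≤` on `E`: `y ≤ z` iff `y ∈ W·z` and `w_y ≤_B w_z`. -/
def paraLE (y z : E) : Prop :=
  (∃ w ∈ D.W, w z = y) ∧ D.bruhatLE (D.wmin y) (D.wmin z)

/-- The strict parabolic Bruhat order `<` on `E`. -/
def paraLT (y z : E) : Prop := D.paraLE y z ∧ y ≠ z

/-- The relation `≺`, the transitive closure of the `≺_α` (`α ∈ Φ0+`). -/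
def prec : E → E → Prop :=
  Relation.TransGen fun y z => ∃ α ∈ D.pos, precA α y z

/-- The relation `⪯`. -/
def precLE (y z : E) : Prop := D.prec y z ∨ y = z

/-- The parabolic subgroup `W_J` of `W`. -/
def WJ (J : Set (Fin (D.r + 1))) : Subgroup (E ≃ᵃ[ℝ] E) :=
  Subgroup.closure {g | ∃ j ∈ J, g = D.sgen j}

/-- The set `W^J` of minimal-length representatives of the cosets `W/W_J`. -/
def WminJ (J : Set (Fin (D.r + 1))) : Set (E ≃ᵃ[ℝ] E) :=
  {w | w ∈ D.W ∧ ∀ u ∈ D.WJ J, D.len w ≤ D.len (w * u)}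

/-- Dominant elements: `α(μ) ≥ 0` for all `α ∈ Φ0+`. -/
def IsDom (μ : E) : Prop := ∀ α ∈ D.pos, 0 ≤ ⟪α, μ⟫_ℝ

/-- `Π0(v) = Φ0+ ∩ v⁻¹Φ0−` for `v ∈ W0`. -/
def Pi0 (v : E ≃ᵃ[ℝ] E) : Finset E := D.pos.filter fun α => -(v.linear α) ∈ D.pos

/-- `χ = χ₊ − χ₋ : Φ0 → {±1}`. -/
def chi (α : E) : ℤ := if α ∈ D.pos then 1 else -1

end Data

/-- The character `𝔰_y : μ ↦ ∏_{α ∈ Φ0+} k_α^{η(α(y))·α(μ)}` (evaluated at points `μ` where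
all `α(μ)` are integers, e.g. on a lattice `Λ ∈ 𝓛`). -/
def sweight {F : Type*} [Field F] (D : Data E) (k : E → Fˣ) (y μ : E) : Fˣ :=
  ∏ α ∈ D.pos, k α ^ (eta ⟪α, y⟫_ℝ * ⌊⟪α, μ⟫_ℝ⌋)

/-- The action of `w ∈ W` on characters of `Q∨`: for `w = τ(ν)v`,
`(w·t)(μ) = q^{⟪ν,μ⟫}·t(v⁻¹μ)`. -/
def charAct {F : Type*} [Field F] (q : Fˣ) (w : E ≃ᵃ[ℝ] E) (t : E → Fˣ) : E → Fˣ :=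
  fun μ => q ^ ⌊⟪w 0, μ⟫_ℝ⌋ * t (w.linear.symm μ)

/-- `t` defines a multiplicative character of `Q∨`, i.e. an element of `T = Hom(Q∨, Fˣ)`. -/
def IsChar {F : Type*} [Field F] (D : Data E) (t : E → Fˣ) : Prop :=
  ∀ μ ∈ D.Qv, ∀ ν ∈ D.Qv, t (μ + ν) = t μ * t ν

/-- `q_α := q^{2/‖α‖²}`. -/
def qroot {F : Type*} [Field F] (q : Fˣ) (α : E) : Fˣ := q ^ ⌊2 / ⟪α, α⟫_ℝ⌋

/-- Membership in `T_J`: `t ∈ T` with `t^{α_i∨} = 1` for `i ∈ J ∩ {1,…,r}`, and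
`q_φ·t^{−φ∨} = 1` if `0 ∈ J`. -/
def InTJ {F : Type*} [Field F] (D : Data E) (q : Fˣ) (J : Set (Fin (D.r + 1)))
    (t : E → Fˣ) : Prop :=
  IsChar D t ∧ (∀ i : Fin D.r, i.succ ∈ J → t (cv (D.simple i)) = 1) ∧
    ((0 : Fin (D.r + 1)) ∈ J → qroot q D.hroot * t (-cv D.hroot) = 1)

/-- `κ_v(y) = ∏_{α ∈ Π0(v)} k_α^{−η(α(y))}`. -/
def kappa {F : Type*} [Field F] (D : Data E) (k : E → Fˣ) (v : E ≃ᵃ[ℝ] E) (y : E) : Fˣ :=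
  ∏ α ∈ D.Pi0 v, k α ^ (-eta ⟪α, y⟫_ℝ)

/-- The (quasi-)monomial `x^y`, as an element of `⊕_{z ∈ E} F x^z`. -/
def xmono (F : Type*) [Field F] (y : E) : E →₀ F := Finsupp.single y 1

/-- The multiplication operator `π(x^μ) : x^y ↦ x^{y+μ}`. -/
def xop (F : Type*) [Field F] (μ : E) : Module.End F (E →₀ F) :=
  Finsupp.lmapDomain F F (· + μ)

/-- The truncated divided difference `∇_i(x^y)` in its explicit form: with `n = ⌊α(y)⌋`,
`−(x^{y−α∨} + ⋯ + x^{y−nα∨})` if `n ≥ 1`, `0` if `n = 0`, and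
`x^y + x^{y+α∨} + ⋯ + x^{y+(−n−1)α∨}` if `n ≤ −1`. -/
def nablaS (F : Type*) [Field F] (α y : E) : E →₀ F :=
  if 1 ≤ ⌊⟪α, y⟫_ℝ⌋ then
    -∑ s ∈ Finset.Icc (1 : ℤ) ⌊⟪α, y⟫_ℝ⌋, Finsupp.single (y - (s : ℝ) • cv α) (1 : F)
  else
    ∑ s ∈ Finset.Icc (0 : ℤ) (-⌊⟪α, y⟫_ℝ⌋ - 1), Finsupp.single (y + (s : ℝ) • cv α) (1 : F)

/-- The truncated divided difference `∇_0(x^y)` in its explicit form: with `n = ⌊−φ(y)⌋`,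
`−(q_φ^{−1}x^{y+φ∨} + ⋯ + q_φ^{−n}x^{y+nφ∨})` if `n ≥ 1`, `0` if `n = 0`, and
`x^y + q_φ x^{y−φ∨} + ⋯ + q_φ^{−n−1}x^{y+(n+1)φ∨}` if `n ≤ −1`. -/
def nabla0 {F : Type*} [Field F] (D : Data E) (q : Fˣ) (y : E) : E →₀ F :=
  if 1 ≤ ⌊-⟪D.hroot, y⟫_ℝ⌋ then
    -∑ s ∈ Finset.Icc (1 : ℤ) ⌊-⟪D.hroot, y⟫_ℝ⌋,
      (((qroot q D.hroot : Fˣ) : F) ^ (-s)) • Finsupp.single (y + (s : ℝ) • cv D.hroot) (1 : F)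
  else
    ∑ s ∈ Finset.Icc (0 : ℤ) (-⌊-⟪D.hroot, y⟫_ℝ⌋ - 1),
      (((qroot q D.hroot : Fˣ) : F) ^ s) • Finsupp.single (y - (s : ℝ) • cv D.hroot) (1 : F)

/-- `k_j := k_{α_j}` (`0 ≤ j ≤ r`), with `k_0 = k_φ`. -/
def kgen {F : Type*} [Field F] (D : Data E) (k : E → Fˣ) : Fin (D.r + 1) → Fˣ :=
  Fin.cases (k D.hroot) fun i => k (D.simple i)

/-- The image of the monomial `x^y` under the truncated Demazure–Lusztig operator `π(T_j)`:
`π(T_i)x^y = k_i^{χ_ℤ(α_i(y))}x^{s_i y} + (k_i − k_i^{−1})∇_i(x^y)` for `1 ≤ i ≤ r`, and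
`π(T_0)x^y = k_0^{χ_ℤ(α_0(y))}𝔱_y^{φ∨}x^{s_φ y} + (k_0 − k_0^{−1})∇_0(x^y)`. -/
def Tfun {F : Type*} [Field F] (D : Data E) (q : Fˣ) (k t : E → Fˣ) :
    Fin (D.r + 1) → E → E →₀ F :=
  Fin.cases
    (fun y =>
      ((if ∃ n : ℤ, aval (D.asimple 0) y = (n : ℝ) then ((k D.hroot : Fˣ) : F) else 1) *
          ((charAct q (D.wmin y) t (cv D.hroot) : Fˣ) : F)) •
          Finsupp.single (aRefl D.hroot 0 y) (1 : F) +
        (((k D.hroot : Fˣ) : F) - (((k D.hroot)⁻¹ : Fˣ) : F)) • nabla0 D q y)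
    fun i y =>
      (if ∃ n : ℤ, ⟪D.simple i, y⟫_ℝ = (n : ℝ) then ((k (D.simple i) : Fˣ) : F) else 1) •
          Finsupp.single (aRefl (D.simple i) 0 y) (1 : F) +
        (((k (D.simple i) : Fˣ) : F) - (((k (D.simple i))⁻¹ : Fˣ) : F)) • nablaS F (D.simple i) y

/-- The truncated Demazure–Lusztig operator `π(T_j)` on `⊕_{y ∈ E} F x^y`. -/
def Top {F : Type*} [Field F] (D : Data E) (q : Fˣ) (k t : E → Fˣ) (j : Fin (D.r + 1)) :
    Module.End F (E →₀ F) :=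
  Finsupp.linearCombination F (Tfun D q k t j)

/-- `π(((1 − x^{−α(μ)α∨})/(1 − x^{α∨}))·x^μ)` applied to `x^y`: the finite geometric sum
appearing in the cross relation for `T_i`. -/
def crossS (F : Type*) [Field F] (α μ y : E) : E →₀ F :=
  if 1 ≤ ⌊⟪α, μ⟫_ℝ⌋ then
    -∑ s ∈ Finset.Icc (1 : ℤ) ⌊⟪α, μ⟫_ℝ⌋, Finsupp.single (y + μ - (s : ℝ) • cv α) (1 : F)
  else
    ∑ s ∈ Finset.Icc (0 : ℤ) (-⌊⟪α, μ⟫_ℝ⌋ - 1), Finsupp.single (y + μ + (s : ℝ) • cv α) (1 : F)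

/-- `π(((1 − (q_φ x^{−φ∨})^{φ(μ)})/(1 − q_φ x^{−φ∨}))·x^μ)` applied to `x^y`: the finite
geometric sum appearing in the cross relation for `T_0`. -/
def cross0 {F : Type*} [Field F] (D : Data E) (q : Fˣ) (μ y : E) : E →₀ F :=
  if 0 ≤ ⌊⟪D.hroot, μ⟫_ℝ⌋ then
    ∑ s ∈ Finset.Icc (0 : ℤ) (⌊⟪D.hroot, μ⟫_ℝ⌋ - 1),
      (((qroot q D.hroot : Fˣ) : F) ^ s) • Finsupp.single (y + μ - (s : ℝ) • cv D.hroot) (1 : F)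
  else
    -∑ s ∈ Finset.Icc (1 : ℤ) (-⌊⟪D.hroot, μ⟫_ℝ⌋),
      (((qroot q D.hroot : Fˣ) : F) ^ (-s)) • Finsupp.single (y + μ + (s : ℝ) • cv D.hroot) (1 : F)

/-- The quasi-monomial `x^y` in the model `Q^{(c)} ⊆ (E → Q)` of `Q ⊗_P P^{(c)}`:
`x^y` is the function `z ↦ x^{y−z}` supported on `y + Q∨`. -/
def xiQ {Q : Type*} [Field Q] (D : Data E) (mono : E → Q) (y : E) : E → Q :=
  fun z => if z - y ∈ D.Qv then mono (y - z) else 0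

/-- Membership in the model `Q^{(c)} ⊆ (E → Q)` of `Q ⊗_P P^{(c)}`: functions supported on
`O_c` satisfying the covariance `ξ(z + ν) = x^{−ν}·ξ(z)` (`ν ∈ Q∨`). -/
def IsQc {Q : Type*} [Field Q] (D : Data E) (mono : E → Q) (c : E) (ξ : E → Q) : Prop :=
  (∀ z, z ∉ D.Orb c → ξ z = 0) ∧
    ∀ z ∈ D.Orb c, ∀ ν ∈ D.Qv, ξ (z + ν) = (mono ν)⁻¹ * ξ z

/-- `x^{α_0∨} = q_φ x^{−φ∨}` as an element of `Q`. -/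
def xroot0 {F Q : Type*} [Field F] [Field Q] (D : Data E) (ι : F →+* Q) (q : Fˣ)
    (mono : E → Q) : Q :=
  ι ((qroot q D.hroot : Fˣ) : F) * mono (-cv D.hroot)

/-- The right-hand side of the defining formula for `σ(s_j)(x^y)`:
`(k_j^{χ_ℤ(α_j(y))}(x^{α_j∨} − 1)/(k_j x^{α_j∨} − k_j^{−1}))·s_{j,𝔱}x^y
 + ((k_j − k_j^{−1})/(k_j x^{α_j∨} − k_j^{−1}))·x^{y − ⌊Dα_j(y)⌋α_j∨}`. -/
def sigmaFormula {F Q : Type*} [Field F] [Field Q] (D : Data E) (ι : F →+* Q) (q : Fˣ)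
    (k t : E → Fˣ) (mono : E → Q) : Fin (D.r + 1) → E → E → Q :=
  Fin.cases
    (fun y =>
      (((if ∃ n : ℤ, aval (D.asimple 0) y = (n : ℝ) then ι ((k D.hroot : Fˣ) : F) else 1) *
            (xroot0 D ι q mono - 1)) /
          (ι ((k D.hroot : Fˣ) : F) * xroot0 D ι q mono - ι (((k D.hroot)⁻¹ : Fˣ) : F))) •
          (ι ((charAct q (D.wmin y) t (cv D.hroot) : Fˣ) : F) •
            xiQ D mono (aRefl D.hroot 0 y)) +
        ((ι ((k D.hroot : Fˣ) : F) - ι (((k D.hroot)⁻¹ : Fˣ) : F)) /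
          (ι ((k D.hroot : Fˣ) : F) * xroot0 D ι q mono - ι (((k D.hroot)⁻¹ : Fˣ) : F))) •
          (ι (((qroot q D.hroot ^ (-⌊-⟪D.hroot, y⟫_ℝ⌋) : Fˣ) : F)) •
            xiQ D mono (y + (⌊-⟪D.hroot, y⟫_ℝ⌋ : ℝ) • cv D.hroot)))
    fun i y =>
      (((if ∃ n : ℤ, ⟪D.simple i, y⟫_ℝ = (n : ℝ) then ι ((k (D.simple i) : Fˣ) : F) else 1) *
            (mono (cv (D.simple i)) - 1)) /
          (ι ((k (D.simple i) : Fˣ) : F) * mono (cv (D.simple i)) -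
            ι (((k (D.simple i))⁻¹ : Fˣ) : F))) •
          xiQ D mono (aRefl (D.simple i) 0 y) +
        ((ι ((k (D.simple i) : Fˣ) : F) - ι (((k (D.simple i))⁻¹ : Fˣ) : F)) /
          (ι ((k (D.simple i) : Fˣ) : F) * mono (cv (D.simple i)) -
            ι (((k (D.simple i))⁻¹ : Fˣ) : F))) •
          xiQ D mono (y - (⌊⟪D.simple i, y⟫_ℝ⌋ : ℝ) • cv (D.simple i))

/-!
Since `W = W0 ⋉ Q∨`, we can write `y = v·c + μ` with `v ∈ W0`, `μ ∈ Q∨`; choose such a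
decomposition with `⟪2ρ, μ⟫` minimal, where `2ρ` is the sum of the positive roots. This is
possible because these values are integers, bounded below since `|β(v·c)| ≤ 1` for every root
`β`. If `μ` were not antidominant, some simple root would have `α_i(μ) ≥ 1`; together with
`α_i(y) ≤ 0` and `α_i(v·c) ≥ -1` this forces `α_i(v·c) = -1`, so `y = (s_i v)·c + (μ - α_i∨)`,
and `⟪2ρ, α_i∨⟫ = 2` contradicts minimality.
-/

lemma lrefl_apply {α : E} (hα : α ≠ 0) (y : E) : lrefl α y = y - ⟪α, y⟫_ℝ • cv α := by
  rw [lrefl, dif_neg (real_inner_self_pos.mpr hα).ne', Module.reflection_apply]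
  simp only [rootForm, LinearMap.coe_mk, AddHom.coe_mk]
  rw [cv, smul_smul, mul_comm]

lemma lrefl_involutive (α : E) : Function.Involutive (lrefl α) := by
  unfold lrefl
  split
  · exact fun _ => rfl
  · exact Module.involutive_reflection _

lemma aRefl_zero_apply (α y : E) : aRefl α 0 y = lrefl α y := by
  simp [aRefl]

lemma inner_cv_self {α : E} (hα : α ≠ 0) : ⟪α, cv α⟫_ℝ = 2 := by
  rw [cv, real_inner_smul_right, div_mul_cancel₀ _ (real_inner_self_pos.mpr hα).ne']

lemma lrefl_self {α : E} (hα : α ≠ 0) : lrefl α α = -α := by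
  rw [lrefl_apply hα, cv, smul_smul, mul_div_cancel₀ _ (real_inner_self_pos.mpr hα).ne',
    two_smul]
  abel

lemma inner_lrefl_lrefl {α : E} (hα : α ≠ 0) (x y : E) :
    ⟪lrefl α x, lrefl α y⟫_ℝ = ⟪x, y⟫_ℝ := by
  have := (real_inner_self_pos.mpr hα).ne'
  simp only [lrefl_apply hα, cv, inner_sub_left, inner_sub_right, real_inner_smul_left,
    real_inner_smul_right, real_inner_comm x α]
  field_simp
  ring

lemma inner_lrefl_cv {α : E} (hα : α ≠ 0) (β : E) : ⟪lrefl α β, cv α⟫_ℝ = -⟪β, cv α⟫_ℝ := by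
  have := (real_inner_self_pos.mpr hα).ne'
  simp only [lrefl_apply hα, cv, inner_sub_left, real_inner_smul_left, real_inner_smul_right,
    real_inner_comm α β]
  field_simp
  ring

lemma aRefl_zero_inv (α : E) : (aRefl α 0)⁻¹ = aRefl α 0 :=
  inv_eq_of_mul_eq_one_left <| AffineEquiv.ext fun y => by
    simp only [AffineEquiv.coe_mul, Function.comp_apply, aRefl_zero_apply, lrefl_involutive α y]
    rfl

lemma _root_.AffineEquiv.coe_eq_linear_of_map_zero {k V : Type*} [Ring k] [AddCommGroup V]
    [Module k V] {v : V ≃ᵃ[k] V} (hv : v 0 = 0) : ⇑v = v.linear := by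
  have := (v : V →ᵃ[k] V).decomp
  ext x
  simpa [hv] using congrFun this x

namespace Data

variable {D : Data E}

variable (D) in
def rootIsometries : Submonoid (E ≃ᵃ[ℝ] E) where
  carrier := {v | v 0 = 0 ∧ (∀ x y, ⟪v x, v y⟫_ℝ = ⟪x, y⟫_ℝ) ∧ ∀ β ∈ D.Φ0, v β ∈ D.Φ0}
  mul_mem' := by
    rintro u v ⟨hu0, hu, huΦ⟩ ⟨hv0, hv, hvΦ⟩
    refine ⟨?_, fun x y => ?_, fun β hβ => huΦ _ (hvΦ β hβ)⟩
    · simp [hv0, hu0]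
    · simp only [AffineEquiv.coe_mul, Function.comp_apply, hu, hv]
  one_mem' := ⟨rfl, fun _ _ => rfl, fun _ h => h⟩

lemma aRefl_zero_mem_rootIsometries {α : E} (hα : α ∈ D.Φ0) : aRefl α 0 ∈ D.rootIsometries := by
  have hα0 := D.root_ne_zero α hα
  refine ⟨?_, fun x y => ?_, fun β hβ => D.root_refl_mem α hα β hβ⟩
  · simp [aRefl_zero_apply]
  · simp only [aRefl_zero_apply, inner_lrefl_lrefl hα0]

lemma mem_rootIsometries_of_mem_W0 {v : E ≃ᵃ[ℝ] E} (hv : v ∈ D.W0) : v ∈ D.rootIsometries := by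
  suffices D.W0.toSubmonoid ≤ D.rootIsometries from this hv
  rw [W0, Subgroup.closure_toSubmonoid, Submonoid.closure_le]
  rintro g (⟨α, hα, rfl⟩ | hg)
  · exact aRefl_zero_mem_rootIsometries hα
  · obtain ⟨α, hα, hg⟩ := Set.mem_inv.mp hg
    rw [← inv_inv g, hg, aRefl_zero_inv]
    exact aRefl_zero_mem_rootIsometries hα

namespace rootIsometries

lemma map_add {v : E ≃ᵃ[ℝ] E} (hv : v ∈ D.rootIsometries) (x y : E) : v (x + y) = v x + v y := by
  rw [AffineEquiv.coe_eq_linear_of_map_zero hv.1, _root_.map_add]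

lemma map_cv {v : E ≃ᵃ[ℝ] E} (hv : v ∈ D.rootIsometries) (β : E) : v (cv β) = cv (v β) := by
  rw [cv, cv, hv.2.1, AffineEquiv.coe_eq_linear_of_map_zero hv.1, map_smul]

lemma map_mem_Qv {v : E ≃ᵃ[ℝ] E} (hv : v ∈ D.rootIsometries) {μ : E} (hμ : μ ∈ D.Qv) :
    v μ ∈ D.Qv := by
  have : D.Qv ≤ D.Qv.comap v.linear.toLinearMap.toAddMonoidHom := by
    rw [Qv, AddSubgroup.closure_le]
    rintro _ ⟨β, hβ, rfl⟩
    rw [SetLike.mem_coe, AddSubgroup.mem_comap, LinearMap.toAddMonoidHom_coe,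
      LinearEquiv.coe_coe, ← AffineEquiv.coe_eq_linear_of_map_zero hv.1, map_cv hv]
    exact AddSubgroup.subset_closure ⟨v β, hv.2.2 β hβ, rfl⟩
  simpa [AffineEquiv.coe_eq_linear_of_map_zero hv.1] using this hμ

end rootIsometries

lemma inner_W0_apply {v : E ≃ᵃ[ℝ] E} (hv : v ∈ D.W0) (β x : E) :
    ⟪β, v x⟫_ℝ = ⟪v⁻¹ β, x⟫_ℝ := by
  have hv' := mem_rootIsometries_of_mem_W0 (inv_mem hv)
  rw [← hv'.2.1, AffineEquiv.inv_def, AffineEquiv.symm_apply_apply]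

lemma exists_W0_Qv_of_mem_W {w : E ≃ᵃ[ℝ] E} (hw : w ∈ D.W) :
    ∃ v ∈ D.W0, ∃ μ ∈ D.Qv, ∀ x, w x = v x + μ := by
  induction hw using Subgroup.closure_induction'' with
  | mem g hg =>
    rcases hg with hg | ⟨μ, hμ, rfl⟩
    · exact ⟨g, Subgroup.subset_closure hg, 0, zero_mem _, fun x => (add_zero _).symm⟩
    · exact ⟨1, one_mem _, μ, hμ, fun x => add_comm μ x⟩
  | inv_mem g hg =>
    rcases hg with ⟨α, hα, rfl⟩ | ⟨μ, hμ, rfl⟩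
    · exact ⟨aRefl α 0, Subgroup.subset_closure ⟨α, hα, rfl⟩, 0, zero_mem _,
        fun x => by rw [aRefl_zero_inv, add_zero]⟩
    · refine ⟨1, one_mem _, -μ, neg_mem hμ, fun x => ?_⟩
      rw [AffineEquiv.inv_def, AffineEquiv.symm_apply_eq]
      simp [tr]
  | one => exact ⟨1, one_mem _, 0, zero_mem _, fun x => (add_zero _).symm⟩
  | mul w₁ w₂ _ _ h₁ h₂ =>
    obtain ⟨v₁, hv₁, μ₁, hμ₁, he₁⟩ := h₁
    obtain ⟨v₂, hv₂, μ₂, hμ₂, he₂⟩ := h₂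
    have hv₁' := mem_rootIsometries_of_mem_W0 hv₁
    refine ⟨v₁ * v₂, mul_mem hv₁ hv₂, v₁ μ₂ + μ₁,
      add_mem (rootIsometries.map_mem_Qv hv₁' hμ₂) hμ₁, fun x => ?_⟩
    simp only [AffineEquiv.coe_mul, Function.comp_apply, he₁, he₂,
      rootIsometries.map_add hv₁', add_assoc]

lemma inner_mem_Icc_of_mem_Cbar {c : E} (hc : c ∈ D.Cbar) {α : E} (hα : α ∈ D.pos) :
    ⟪α, c⟫_ℝ ∈ Set.Icc 0 1 := by
  have hclosed : IsClosed ((fun y => ⟪α, y⟫_ℝ) ⁻¹' Set.Icc 0 1) :=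
    isClosed_Icc.preimage (continuous_const.inner continuous_id)
  refine closure_minimal (fun y hy => ?_) hclosed hc
  exact ⟨(hy α hα).1.le, (hy α hα).2.le⟩

lemma abs_inner_le_one_of_mem_Cbar {c : E} (hc : c ∈ D.Cbar) {γ : E} (hγ : γ ∈ D.Φ0) :
    |⟪γ, c⟫_ℝ| ≤ 1 := by
  rw [abs_le]
  rcases D.pos_dichotomy γ hγ with ⟨h, _⟩ | ⟨_, h⟩
  · obtain ⟨h₀, h₁⟩ := inner_mem_Icc_of_mem_Cbar hc h
    constructor <;> linarith
  · obtain ⟨h₀, h₁⟩ := inner_mem_Icc_of_mem_Cbar hc h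
    rw [inner_neg_left] at h₀ h₁
    constructor <;> linarith

lemma abs_inner_W0_apply_le_one {c : E} (hc : c ∈ D.Cbar) {v : E ≃ᵃ[ℝ] E} (hv : v ∈ D.W0)
    {β : E} (hβ : β ∈ D.Φ0) : |⟪β, v c⟫_ℝ| ≤ 1 := by
  rw [inner_W0_apply hv]
  exact abs_inner_le_one_of_mem_Cbar hc ((mem_rootIsometries_of_mem_W0 (inv_mem hv)).2.2 β hβ)

lemma inner_mem_range_intCast {β : E} (hβ : β ∈ D.Φ0) {μ : E} (hμ : μ ∈ D.Qv) :
    ⟪β, μ⟫_ℝ ∈ (Int.castAddHom ℝ).range := by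
  have : D.Qv ≤ (Int.castAddHom ℝ).range.comap (innerₛₗ ℝ β).toAddMonoidHom := by
    rw [Qv, AddSubgroup.closure_le]
    rintro _ ⟨γ, hγ, rfl⟩
    obtain ⟨n, hn⟩ := D.root_crystal β hβ γ hγ
    exact ⟨n, by simpa [real_inner_comm] using hn.symm⟩
  exact this hμ

lemma eq_simple_of_add_eq_smul_simple {β γ : E} (hβ : β ∈ D.pos) (hγ : γ ∈ D.pos) {i : Fin D.r}
    {k : ℝ} (h : β + γ = k • D.simple i) : β = D.simple i := by
  obtain ⟨n, rfl⟩ := D.pos_nat_comb β hβ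
  obtain ⟨m, rfl⟩ := D.pos_nat_comb γ hγ
  have hcoeff : ∀ j, (n j : ℝ) + m j - (if j = i then k else 0) = 0 := by
    refine Fintype.linearIndependent_iff.mp D.simple_indep _ ?_
    simp only [sub_smul, add_smul, ite_smul, zero_smul, Finset.sum_sub_distrib,
      Finset.sum_add_distrib, Finset.sum_ite_eq', Finset.mem_univ, if_true, h, sub_self]
  have hβi : ∑ j, (n j : ℝ) • D.simple j = (n i : ℝ) • D.simple i := by
    refine Finset.sum_eq_single i (fun j _ hj => ?_) (by simp)
    have := hcoeff j
    rw [if_neg hj] at this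
    have : (n j : ℝ) = 0 := by linarith [(m j).cast_nonneg (α := ℝ), (n j).cast_nonneg (α := ℝ)]
    rw [this, zero_smul]
  rw [hβi] at hβ ⊢
  rcases D.root_reduced _ (D.pos_subset (D.simple_mem_pos i)) _ (D.pos_subset hβ) with h1 | h1
  · rw [h1, one_smul]
  · linarith [(n i).cast_nonneg (α := ℝ)]

lemma lrefl_simple_mem_pos {β : E} (hβ : β ∈ D.pos) {i : Fin D.r} (hne : β ≠ D.simple i) :
    lrefl (D.simple i) β ∈ D.pos := by
  have hsimple := D.pos_subset (D.simple_mem_pos i)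
  have hmem : lrefl (D.simple i) β ∈ D.Φ0 := by
    simpa [aRefl_zero_apply] using D.root_refl_mem _ hsimple β (D.pos_subset hβ)
  rcases D.pos_dichotomy _ hmem with ⟨h, _⟩ | ⟨_, hneg⟩
  · exact h
  · refine absurd (eq_simple_of_add_eq_smul_simple hβ hneg
      (k := ⟪D.simple i, β⟫_ℝ * (2 / ⟪D.simple i, D.simple i⟫_ℝ)) ?_) hne
    rw [lrefl_apply (D.root_ne_zero _ hsimple), cv, smul_smul]
    abel

variable (D) in
def twoRho : E := ∑ β ∈ D.pos, β

lemma inner_twoRho_cv_simple (i : Fin D.r) : ⟪D.twoRho, cv (D.simple i)⟫_ℝ = 2 := by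
  set a := D.simple i
  have ha : a ∈ D.pos := D.simple_mem_pos i
  have ha0 : a ≠ 0 := D.root_ne_zero a (D.pos_subset ha)
  have hmaps : ∀ β ∈ D.pos.erase a, lrefl a β ∈ D.pos.erase a := by
    intro β hβ
    obtain ⟨hβa, hβ⟩ := Finset.mem_erase.mp hβ
    refine Finset.mem_erase.mpr ⟨fun h => ?_, lrefl_simple_mem_pos hβ hβa⟩
    have hβ_neg : β = -a := by rw [← lrefl_involutive a β, h, lrefl_self ha0]
    rcases D.pos_dichotomy a (D.pos_subset ha) with ⟨_, hna⟩ | ⟨hna, _⟩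
    · exact hna (hβ_neg ▸ hβ)
    · exact hna ha
  -- `s_a` permutes `Φ0+ ∖ {a}` and negates the pairing with `a∨`
  have hrest : ∑ β ∈ D.pos.erase a, ⟪β, cv a⟫_ℝ = 0 := by
    have hperm : ∑ β ∈ D.pos.erase a, ⟪lrefl a β, cv a⟫_ℝ = ∑ β ∈ D.pos.erase a, ⟪β, cv a⟫_ℝ :=
      Finset.sum_nbij' (lrefl a) (lrefl a) hmaps hmaps (fun β _ => lrefl_involutive a β)
        (fun β _ => lrefl_involutive a β) (fun _ _ => rfl)
    simp only [inner_lrefl_cv ha0, Finset.sum_neg_distrib] at hperm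
    linarith
  rw [twoRho, sum_inner, ← Finset.add_sum_erase _ _ ha, hrest, add_zero, inner_cv_self ha0]

lemma inner_twoRho_mem_range_intCast {μ : E} (hμ : μ ∈ D.Qv) :
    ⟪D.twoRho, μ⟫_ℝ ∈ (Int.castAddHom ℝ).range := by
  rw [twoRho, sum_inner]
  exact sum_mem fun β hβ => inner_mem_range_intCast (D.pos_subset hβ) hμ

lemma inner_twoRho_W0_apply_le {c : E} (hc : c ∈ D.Cbar) {v : E ≃ᵃ[ℝ] E} (hv : v ∈ D.W0) :
    ⟪D.twoRho, v c⟫_ℝ ≤ D.pos.card := by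
  rw [twoRho, sum_inner, ← nsmul_one, ← Finset.sum_const]
  exact Finset.sum_le_sum fun β hβ =>
    (abs_le.mp (abs_inner_W0_apply_le_one hc hv (D.pos_subset hβ))).2

lemma exists_simple_inner_pos {α μ : E} (hα : α ∈ D.pos) (hμ : 0 < ⟪α, μ⟫_ℝ) :
    ∃ i, 0 < ⟪D.simple i, μ⟫_ℝ := by
  obtain ⟨n, rfl⟩ := D.pos_nat_comb α hα
  by_contra! h
  rw [sum_inner] at hμ
  refine hμ.not_ge (Finset.sum_nonpos fun i _ => ?_)
  rw [real_inner_smul_left]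
  exact mul_nonpos_of_nonneg_of_nonpos (n i).cast_nonneg (h i)

lemma eq_aRefl_mul_apply_add_sub_cv {c y : E} (hc : c ∈ D.Cbar)
    (hy : ∀ α ∈ D.pos, ⟪α, y⟫_ℝ ≤ 0) {v : E ≃ᵃ[ℝ] E} (hv : v ∈ D.W0) {μ : E} (hμ : μ ∈ D.Qv)
    (hyvμ : y = v c + μ) {α : E} (hα : α ∈ D.pos) (hαμ : 0 < ⟪α, μ⟫_ℝ) :
    y = (aRefl α 0 * v) c + (μ - cv α) := by
  have hαΦ := D.pos_subset hα
  have hαμ_one : 1 ≤ ⟪α, μ⟫_ℝ := by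
    obtain ⟨n, hn⟩ := inner_mem_range_intCast hαΦ hμ
    simp only [Int.coe_castAddHom] at hn
    rw [← hn] at hαμ ⊢
    have : 0 < n := by exact_mod_cast hαμ
    exact_mod_cast this
  have hαvc : ⟪α, v c⟫_ℝ = -1 := by
    have hαy := hy α hα
    rw [hyvμ, inner_add_right] at hαy
    linarith [(abs_le.mp (abs_inner_W0_apply_le_one hc hv hαΦ)).1]
  rw [AffineEquiv.coe_mul, Function.comp_apply, aRefl_zero_apply,
    lrefl_apply (D.root_ne_zero α hαΦ), hαvc, hyvμ, neg_one_smul]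
  abel

lemma exists_repr_min_inner_twoRho {c y : E} (hc : c ∈ D.Cbar) (hy : y ∈ D.Orb c) :
    ∃ v ∈ D.W0, ∃ μ ∈ D.Qv, y = v c + μ ∧
      ∀ v' ∈ D.W0, ∀ μ' ∈ D.Qv, y = v' c + μ' → ⟪D.twoRho, μ⟫_ℝ ≤ ⟪D.twoRho, μ'⟫_ℝ := by
  obtain ⟨w, hw, rfl⟩ := hy
  obtain ⟨v₀, hv₀, μ₀, hμ₀, hw⟩ := exists_W0_Qv_of_mem_W hw
  let P : ℤ → Prop := fun n => ∃ v ∈ D.W0, ∃ μ ∈ D.Qv, w c = v c + μ ∧ ⟪D.twoRho, μ⟫_ℝ = n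
  have hbdd : ∀ n, P n → ⌊⟪D.twoRho, w c⟫_ℝ⌋ - D.pos.card ≤ n := by
    rintro n ⟨v, hv, μ, -, hwc, hn⟩
    have hsplit : ⟪D.twoRho, μ⟫_ℝ = ⟪D.twoRho, w c⟫_ℝ - ⟪D.twoRho, v c⟫_ℝ := by
      rw [hwc, inner_add_right]
      ring
    have : ((⌊⟪D.twoRho, w c⟫_ℝ⌋ - D.pos.card : ℤ) : ℝ) ≤ n := by
      push_cast
      linarith [Int.floor_le ⟪D.twoRho, w c⟫_ℝ, inner_twoRho_W0_apply_le hc hv]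
    exact_mod_cast this
  have hP₀ : ∃ n, P n := by
    obtain ⟨n, hn⟩ := inner_twoRho_mem_range_intCast hμ₀
    exact ⟨n, v₀, hv₀, μ₀, hμ₀, hw c, hn.symm⟩
  obtain ⟨n, ⟨v, hv, μ, hμ, hwc, hn⟩, hmin⟩ := Int.exists_least_of_bdd ⟨_, hbdd⟩ hP₀
  refine ⟨v, hv, μ, hμ, hwc, fun v' hv' μ' hμ' hwc' => ?_⟩
  obtain ⟨n', hn'⟩ := inner_twoRho_mem_range_intCast hμ'
  simp only [Int.coe_castAddHom] at hn'
  rw [hn, ← hn']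
  exact_mod_cast hmin n' ⟨v', hv', μ', hμ', hwc', hn'.symm⟩

end Data

end SSV

theorem statement14_general
    {E : Type*} [NormedAddCommGroup E] [InnerProductSpace ℝ E]
    (D : SSV.Data E) (c : E) (hc : c ∈ D.Cbar) (y : E) (hy : y ∈ D.Orb c)
    (hneg : ∀ α ∈ D.pos, ⟪α, y⟫_ℝ ≤ 0) :
    ∃ v ∈ D.W0, ∃ μ ∈ D.Qv, (∀ α ∈ D.pos, ⟪α, μ⟫_ℝ ≤ 0) ∧ y = v c + μ := by
  obtain ⟨v, hv, μ, hμ, hyvμ, hmin⟩ := SSV.Data.exists_repr_min_inner_twoRho hc hy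
  refine ⟨v, hv, μ, hμ, fun α hα => ?_, hyvμ⟩
  by_contra! hαμ
  obtain ⟨i, hi⟩ := SSV.Data.exists_simple_inner_pos hα hαμ
  have hsimple := D.pos_subset (D.simple_mem_pos i)
  have hdescent := hmin _ (mul_mem (Subgroup.subset_closure ⟨_, hsimple, rfl⟩) hv) _
    (sub_mem hμ (AddSubgroup.subset_closure ⟨_, hsimple, rfl⟩))
    (SSV.Data.eq_aRefl_mul_apply_add_sub_cv hc hneg hv hμ hyvμ (D.simple_mem_pos i) hi)
  rw [inner_sub_right, SSV.Data.inner_twoRho_cv_simple] at hdescent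
  linarith

/-- if `c ∈ C̄₊` and `y ∈ (W·c) ∩ Ē₋`, then `y = v·c + μ` for some
`v ∈ W0` and some `μ ∈ Q∨ ∩ Ē₋`. -/
theorem statement14
    {E : Type*} [NormedAddCommGroup E] [InnerProductSpace ℝ E] [FiniteDimensional ℝ E]
    (D : SSV.Data E) (c : E) (hc : c ∈ D.Cbar) (y : E) (hy : y ∈ D.Orb c)
    (hneg : ∀ α ∈ D.pos, ⟪α, y⟫_ℝ ≤ 0) :
    ∃ v ∈ D.W0, ∃ μ ∈ D.Qv, (∀ α ∈ D.pos, ⟪α, μ⟫_ℝ ≤ 0) ∧ y = v c + μ :=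
  statement14_general D c hc y hy hneg
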